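/- arXiv:2605.03066 — 5 statements merged into one kernel-verified Lean document; each statement's English description precedes it below -/
import Mathlib

section
/- An m-degree m is irreducible (contains exactly one 1-degree) if and only if every set A in m is a cylinder. -/
/-- Many-one reducibility on subsets of ℕ. -/
def ManyOneRed (X Y : Set ℕ) : Prop :=
  ∃ f : ℕ → ℕ, Computable f ∧ ∀ x, x ∈ X ↔ f x ∈ Y

/-- Many-one equivalence. -/
def ManyOneEq (X Y : Set ℕ) : Prop := ManyOneRed X Y ∧ ManyOneRed Y X

/-- One-one reducibility on subsets of ℕ. -/
def OneOneRed (X Y : Set ℕ) : Prop :=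
  ∃ f : ℕ → ℕ, Computable f ∧ Function.Injective f ∧ ∀ x, x ∈ X ↔ f x ∈ Y

/-- One-one equivalence. -/
def OneOneEq (X Y : Set ℕ) : Prop := OneOneRed X Y ∧ OneOneRed Y X

/-- `A × ℕ` coded into ℕ via the standard computable pairing bijection. -/
def timesNat (A : Set ℕ) : Set ℕ :=
  {m | ∃ x ∈ A, ∃ n : ℕ, m = Nat.pair x n}

/-- `C` is a cylinder if `C ≡₁ A × ℕ` for some `A`. -/
def Cylinder (C : Set ℕ) : Prop := ∃ A : Set ℕ, OneOneEq C (timesNat A)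

/-- `S` is computably enumerable: the domain of a partial computable function. -/
def CE (S : Set ℕ) : Prop :=
  ∃ ψ : ℕ →. ℕ, Partrec ψ ∧ ∀ x, x ∈ S ↔ (ψ x).Dom

/-- pm-reducibility: `x ∈ X ↔ ψ(x)↓ ∧ ψ(x) ∈ Y` for a partial computable `ψ`. -/
def PmRed (X Y : Set ℕ) : Prop :=
  ∃ ψ : ℕ →. ℕ, Partrec ψ ∧ ∀ x, x ∈ X ↔ ∃ y ∈ ψ x, y ∈ Y

/-- pm-equivalence. -/
def PmEq (X Y : Set ℕ) : Prop := PmRed X Y ∧ PmRed Y X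

/-- A simple set: c.e., with infinite complement containing no infinite c.e. subset. -/
def SimpleSet (S : Set ℕ) : Prop :=
  CE S ∧ Sᶜ.Infinite ∧ ∀ W : Set ℕ, W ⊆ Sᶜ → CE W → ¬ W.Infinite

/-- A c.e. set `A` has a rigid complement: `Aᶜ` is infinite and any two
pm-equivalent subsets of `Aᶜ` have finite symmetric difference. -/
def RigidComplement (A : Set ℕ) : Prop :=
  Aᶜ.Infinite ∧ ∀ X Y : Set ℕ, X ⊆ Aᶜ → Y ⊆ Aᶜ → PmEq X Y → (symmDiff X Y).Finite

open Classical in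
/-- Truth-table reducibility: a computable list of queries together with a
computable boolean truth-table evaluator. -/
def TTRed (X Y : Set ℕ) : Prop :=
  ∃ (q : ℕ → List ℕ) (t : ℕ → List Bool → Bool),
    Computable q ∧ Computable₂ t ∧
      ∀ x, x ∈ X ↔ t x ((q x).map (fun n => decide (n ∈ Y))) = true

/-- Truth-table equivalence. -/
def TTEq (X Y : Set ℕ) : Prop := TTRed X Y ∧ TTRed Y X


lemma mem_timesNat {C : Set ℕ} {m : ℕ} : m ∈ timesNat C ↔ m.unpair.1 ∈ C := by
  constructor
  · rintro ⟨x, hx, n, rfl⟩; simpa [Nat.unpair_pair] using hx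
  · intro h; exact ⟨m.unpair.1, h, m.unpair.2, (Nat.pair_unpair m).symm⟩

lemma manyOne_to_oneOne_timesNat {X C : Set ℕ} (h : ManyOneRed X (timesNat C)) :
    OneOneRed X (timesNat C) := by
  obtain ⟨f, hf, hmem⟩ := h
  refine ⟨fun x => Nat.pair (f x).unpair.1 x, ?_, ?_, ?_⟩
  · exact Primrec₂.natPair.to_comp.comp
      (((Primrec.fst.comp Primrec.unpair).to_comp).comp hf) Computable.id
  · intro a b hab
    have := congrArg (fun m => m.unpair.2) hab
    simpa [Nat.unpair_pair] using this
  · intro x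
    rw [hmem x, mem_timesNat, mem_timesNat, Nat.unpair_pair]

lemma oneOneRed_trans {X Y Z : Set ℕ} (h1 : OneOneRed X Y) (h2 : OneOneRed Y Z) :
    OneOneRed X Z := by
  obtain ⟨f, hf, hfi, hfm⟩ := h1
  obtain ⟨g, hg, hgi, hgm⟩ := h2
  exact ⟨g ∘ f, hg.comp hf, hgi.comp hfi, fun x => (hfm x).trans (hgm (f x))⟩

lemma manyOneRed_trans {X Y Z : Set ℕ} (h1 : ManyOneRed X Y) (h2 : ManyOneRed Y Z) :
    ManyOneRed X Z := by
  obtain ⟨f, hf, hfm⟩ := h1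
  obtain ⟨g, hg, hgm⟩ := h2
  exact ⟨g ∘ f, hg.comp hf, fun x => (hfm x).trans (hgm (f x))⟩

lemma oneOne_to_manyOne {X Y : Set ℕ} (h : OneOneRed X Y) : ManyOneRed X Y :=
  ⟨h.choose, h.choose_spec.1, h.choose_spec.2.2⟩

lemma manyOneEq_timesNat_self (X : Set ℕ) : ManyOneEq (timesNat X) X := by
  constructor
  · exact ⟨fun m => m.unpair.1, (Primrec.fst.comp Primrec.unpair).to_comp,
      fun m => mem_timesNat⟩
  · refine ⟨fun x => Nat.pair x 0, ?_, ?_⟩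
    · exact Primrec₂.natPair.to_comp.comp Computable.id (Computable.const 0)
    · intro x; rw [mem_timesNat, Nat.unpair_pair]

theorem stmt2 (A : Set ℕ) :
    (∀ X Y : Set ℕ, ManyOneEq X A → ManyOneEq Y A → OneOneEq X Y) ↔
      (∀ X : Set ℕ, ManyOneEq X A → Cylinder X) := by
  constructor
  · intro h X hX
    have hTN : ManyOneEq (timesNat X) A :=
      ⟨manyOneRed_trans (manyOneEq_timesNat_self X).1 hX.1,
       manyOneRed_trans hX.2 (manyOneEq_timesNat_self X).2⟩
    exact ⟨X, h X (timesNat X) hX hTN⟩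
  · intro h X Y hX hY
    obtain ⟨B, hXB⟩ := h X hX
    obtain ⟨C, hYC⟩ := h Y hY
    have hXY : ManyOneRed X Y := manyOneRed_trans hX.1 hY.2
    have hYX : ManyOneRed Y X := manyOneRed_trans hY.1 hX.2
    constructor
    · exact oneOneRed_trans
        (manyOne_to_oneOne_timesNat (manyOneRed_trans hXY (oneOne_to_manyOne hYC.1)))
        hYC.2
    · exact oneOneRed_trans
        (manyOne_to_oneOne_timesNat (manyOneRed_trans hYX (oneOne_to_manyOne hXB.1)))
        hXB.2
end

section
/- If a c.e. set A has a rigid complement, then A is simple. -/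
/-- Any c.e. set pm-reduces to any set containing a given point, by mapping
everything in the domain to that point. -/
lemma pmred_of_ce {W Y : Set ℕ} (hW : CE W) {a : ℕ} (ha : a ∈ Y) : PmRed W Y := by
  obtain ⟨ψ₀, hψ₀, hdom⟩ := hW
  refine ⟨fun x => (ψ₀ x).map fun _ => a, hψ₀.map (Computable.const a).to₂, fun x => ?_⟩
  rw [hdom]
  constructor
  · intro h
    exact ⟨a, (Part.mem_map_iff _).2 ⟨(ψ₀ x).get h, Part.get_mem h, rfl⟩, ha⟩
  · rintro ⟨y, hy, -⟩
    obtain ⟨z, hz, -⟩ := (Part.mem_map_iff _).1 hy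
    exact hz.fst

/-- A singleton pm-reduces to any set containing the point. -/
lemma pmred_singleton {X : Set ℕ} {a : ℕ} (ha : a ∈ X) : PmRed {a} X := by
  refine ⟨fun x => Part.ofOption (if x = a then some a else none), ?_, fun x => ?_⟩
  · exact Computable.ofOption (Primrec.ite
      (Primrec.eq.comp Primrec.id (Primrec.const a))
      (Primrec.const (some a)) (Primrec.const none)).to_comp
  · constructor
    · intro hx
      rw [Set.mem_singleton_iff] at hx; subst hx
      exact ⟨x, by simp, ha⟩
    · rintro ⟨y, hy, -⟩
      by_cases h : x = a
      · exact h
      · simp [h] at hy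

theorem stmt11 (A : Set ℕ) (hA : CE A) (hrigid : RigidComplement A) :
    SimpleSet A := by
  obtain ⟨hinf, hrig⟩ := hrigid
  refine ⟨hA, hinf, fun W hWsub hWce hWinf => ?_⟩
  obtain ⟨a, haW⟩ := hWinf.nonempty
  have haS : ({a} : Set ℕ) ⊆ Aᶜ := by
    intro x hx; rw [Set.mem_singleton_iff] at hx; subst hx; exact hWsub haW
  have hce_singleton : CE ({a} : Set ℕ) := by
    refine ⟨fun x => Part.ofOption (if x = a then some a else none), ?_, fun x => ?_⟩
    · exact Computable.ofOption (Primrec.ite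
        (Primrec.eq.comp Primrec.id (Primrec.const a))
        (Primrec.const (some a)) (Primrec.const none)).to_comp
    · by_cases h : x = a <;> simp [h]
  have heq : PmEq W {a} :=
    ⟨pmred_of_ce hWce rfl, pmred_singleton haW⟩
  have hfin := hrig W {a} hWsub haS heq
  have : (W \ {a}).Infinite := hWinf.diff (Set.finite_singleton a)
  exact this (hfin.subset (fun x hx => by
    simp only [Set.mem_diff, Set.mem_singleton_iff] at hx
    exact Or.inl ⟨hx.1, hx.2⟩))
end

section
/- If A has a rigid complement and W₁, W₂ are disjoint infinite c.e. subsets of the complement of A, then a contradiction follows; hence the complement of a set with rigid complement cannot contain two disjoint infinite c.e. sets. -/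
lemma ce_pmRed {X Y : Set ℕ} (hX : CE X) {y₀ : ℕ} (hy : y₀ ∈ Y) : PmRed X Y := by
  obtain ⟨ψ, hψ, hmem⟩ := hX
  refine ⟨fun x => (ψ x).map (fun _ => y₀), hψ.map (Computable.const y₀).to₂, fun x => ?_⟩
  constructor
  · intro hx
    obtain ⟨v, hv⟩ := Part.dom_iff_mem.1 ((hmem x).1 hx)
    exact ⟨y₀, Part.mem_map _ hv, hy⟩
  · rintro ⟨y, hy', -⟩
    obtain ⟨a, ha, -⟩ := (Part.mem_map_iff _).1 hy'
    exact (hmem x).2 (Part.dom_iff_mem.2 ⟨a, ha⟩)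

theorem stmt12 (A W₁ W₂ : Set ℕ) (hrigid : RigidComplement A)
    (h1 : W₁ ⊆ Aᶜ) (h2 : W₂ ⊆ Aᶜ) (hc1 : CE W₁) (hc2 : CE W₂)
    (hi1 : W₁.Infinite) (hi2 : W₂.Infinite) (hd : Disjoint W₁ W₂) :
    False := by
  obtain ⟨y₁, hy₁⟩ := hi1.nonempty
  obtain ⟨y₂, hy₂⟩ := hi2.nonempty
  have hpm : PmEq W₁ W₂ := ⟨ce_pmRed hc1 hy₂, ce_pmRed hc2 hy₁⟩
  have hfin := hrigid.2 W₁ W₂ h1 h2 hpm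
  have : W₁ ⊆ symmDiff W₁ W₂ := by
    intro x hx
    exact Or.inl ⟨hx, fun hx2 => hd.le_bot ⟨hx, hx2⟩⟩
  exact hi1 (hfin.subset this)
end

section
/- If A is a simple set, then A is not a cylinder. -/
/-! If `A ≡₁ B × ℕ` and `Aᶜ ≠ ∅`, then `B` misses some `b`, so the column `{b} × ℕ` lies outside
`B × ℕ`. Its image under the computable injection `B × ℕ ≤₁ A` is an infinite c.e. subset of `Aᶜ`,
which a simple set does not allow. -/

theorem CE.range {f : ℕ → ℕ} (hf : Computable f) : CE (Set.range f) := by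
  refine ⟨fun m => Nat.rfind fun n => (decide (f n = m) : Part Bool), ?_, fun m => ?_⟩
  · exact Partrec.rfind ((Primrec.eq.decide.to_comp.comp₂
      (hf.comp₂ Computable.snd.to₂) Computable.fst.to₂).partrec₂)
  · constructor
    · rintro ⟨n, rfl⟩
      exact Nat.rfind_dom.mpr ⟨n, by simp, fun _ => trivial⟩
    · intro hdom
      obtain ⟨n, hn, -⟩ := Nat.rfind_dom.mp hdom
      exact ⟨n, by simpa using hn⟩

theorem pair_mem_timesNat_iff {B : Set ℕ} {x n : ℕ} : Nat.pair x n ∈ timesNat B ↔ x ∈ B := by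
  constructor
  · rintro ⟨y, hy, m, hxy⟩
    exact (Nat.pair_eq_pair.mp hxy).1 ▸ hy
  · exact fun hx => ⟨x, hx, n, rfl⟩

theorem compl_nonempty_of_compl_timesNat_nonempty {B : Set ℕ} (h : (timesNat B)ᶜ.Nonempty) :
    Bᶜ.Nonempty := by
  obtain ⟨m, hm⟩ := h
  refine ⟨m.unpair.1, fun hB => hm ?_⟩
  rw [← Nat.pair_unpair m]
  exact pair_mem_timesNat_iff.mpr hB

theorem OneOneRed.compl_nonempty {X Y : Set ℕ} (h : OneOneRed X Y) (hX : Xᶜ.Nonempty) :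
    Yᶜ.Nonempty := by
  obtain ⟨f, -, -, hf⟩ := h
  obtain ⟨x, hx⟩ := hX
  exact ⟨f x, fun hy => hx ((hf x).mpr hy)⟩

theorem OneOneRed.exists_infinite_ce_subset_compl_of_timesNat {B C : Set ℕ}
    (h : OneOneRed (timesNat B) C) {b : ℕ} (hb : b ∉ B) :
    ∃ W ⊆ Cᶜ, CE W ∧ W.Infinite := by
  obtain ⟨g, hg, hg_inj, hg_red⟩ := h
  set column : ℕ → ℕ := fun n => g (Nat.pair b n)
  have column_computable : Computable column :=
    hg.comp (Primrec₂.natPair.to_comp.comp (Computable.const b) Computable.id)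
  have column_injective : Function.Injective column := fun n n' hn =>
    (Nat.pair_eq_pair.mp (hg_inj hn)).2
  refine ⟨Set.range column, ?_, CE.range column_computable,
    Set.infinite_range_of_injective column_injective⟩
  rintro _ ⟨n, rfl⟩ hC
  exact hb (pair_mem_timesNat_iff.mp ((hg_red _).mpr hC))

theorem Cylinder.exists_infinite_ce_subset_compl {C : Set ℕ} (hC : Cylinder C)
    (hne : Cᶜ.Nonempty) : ∃ W ⊆ Cᶜ, CE W ∧ W.Infinite := by
  obtain ⟨B, hCB, hBC⟩ := hC
  obtain ⟨b, hb⟩ := compl_nonempty_of_compl_timesNat_nonempty (hCB.compl_nonempty hne)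
  exact hBC.exists_infinite_ce_subset_compl_of_timesNat hb

theorem stmt17 (A : Set ℕ) (h : SimpleSet A) : ¬ Cylinder A := by
  obtain ⟨-, hinf, hsimple⟩ := h
  intro hcyl
  obtain ⟨W, hW, hce, hWinf⟩ := hcyl.exists_infinite_ce_subset_compl hinf.nonempty
  exact hsimple W hW hce hWinf
end

section
/- If A is 1-equivalent to B, then A is computably isomorphic to B; in particular there is a computable permutation h of ℕ with h(B) = A, which maps Bᶜ bijectively onto Aᶜ. -/
/-!
Myhill's back-and-forth argument. From injective computable reductions `f : X ≤₁ Y` and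
`g : Y ≤₁ X` we build an increasing sequence of finite partial bijections respecting membership;
stage `n + 1` adds `n` to the domain and then to the range. To give a new point `a` an image,
follow the chain `a = a₀, a₁, a₂, …` with `(aₖ₊₁, f aₖ)` already in the table `L`: as `f` and the
table are injective, the `aₖ₊₁` are distinct points of the domain of `L`, so within `|L|` steps
`f aₖ` is free, and it lies in `Y` iff `a ∈ X`. The union of the stages is the graph of a
permutation of `ℕ`, and it is computable in both directions because each stage is.
-/

theorem Primrec.list_lookup {α β : Type*} [Primcodable α] [Primcodable β] [DecidableEq α] :
    Primrec₂ (List.lookup : α → List (α × β) → Option β) := by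
  have : Primrec₂ fun (a : α) (l : List (α × β)) =>
      (l.filterMap fun p => if a = p.1 then some p.2 else none).head? :=
    Primrec.list_head?.comp <| Primrec.listFilterMap Primrec.snd <|
      Primrec.ite (Primrec.eq.comp (Primrec.fst.comp Primrec.fst) (Primrec.fst.comp Primrec.snd))
        (Primrec.option_some.comp (Primrec.snd.comp Primrec.snd)) (Primrec.const none)
  exact this.of_eq fun a l => by simp [List.lookup_eq_findSome?]

theorem Primrec.list_map_swap {α β : Type*} [Primcodable α] [Primcodable β] :
    Primrec fun l : List (α × β) => l.map Prod.swap :=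
  Primrec.list_map Primrec.id (Primrec.pair (Primrec.snd.comp Primrec.snd)
    (Primrec.fst.comp Primrec.snd)).to₂

theorem Computable.nat_iterate {α β : Type*} [Primcodable α] [Primcodable β] {f : α → ℕ}
    {g : α → β} {h : α → β → β} (hf : Computable f) (hg : Computable g) (hh : Computable₂ h) :
    Computable fun a => (h a)^[f a] (g a) :=
  (Computable.nat_rec hf hg
      (hh.comp Computable.fst (Computable.snd.comp Computable.snd)).to₂).of_eq fun a => by
    induction f a <;> simp [*, -Function.iterate_succ, Function.iterate_succ']

theorem Function.exists_le_card_not_iterate {α : Type*} {t : α → α} {P : α → Prop} {D : Finset α}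
    (hmaps : ∀ a, P a → t a ∈ D) (hinj : Set.InjOn t {a | P a}) {a : α} (ha : a ∉ D) :
    ∃ k ≤ D.card, ¬ P (t^[k] a) := by
  by_contra! hP
  have hne : ∀ i j, i < j → j ≤ D.card + 1 → t^[i] a ≠ t^[j] a := by
    intro i
    induction i with
    | zero =>
      rintro (_ | j) hj0 hj heq
      · omega
      rw [Function.iterate_zero_apply, Function.iterate_succ_apply'] at heq
      exact ha (heq ▸ hmaps _ (hP j (by omega)))
    | succ i ih =>
      rintro (_ | j) hij hj heq
      · omega
      rw [Function.iterate_succ_apply', Function.iterate_succ_apply'] at heq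
      exact ih j (by omega) (by omega) (hinj (hP i (by omega)) (hP j (by omega)) heq)
  have := Finset.card_le_card_of_injOn (s := Finset.range (D.card + 1)) (t := D)
    (fun i => t^[i + 1] a)
    (fun i hi => by
      simp only [Function.iterate_succ_apply']
      exact hmaps _ (hP i (by simpa [Nat.lt_succ_iff] using hi)))
    (fun i hi j hj heq => by
      simp only [Finset.coe_range, Set.mem_Iio] at hi hj
      by_contra hij
      rcases Nat.lt_or_gt_of_ne hij with h | h
      · exact hne _ _ (by omega) (by omega) heq
      · exact hne _ _ (by omega) (by omega) heq.symm)
  rw [Finset.card_range] at this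
  omega

namespace List

variable {α β : Type*} [DecidableEq α] {l : List (α × β)} {a : α} {b : β}

theorem mem_of_lookup_eq_some (h : l.lookup a = some b) : (a, b) ∈ l := by
  obtain ⟨l₁, l₂, rfl, -⟩ := lookup_eq_some_iff.1 h
  exact mem_append_right _ mem_cons_self

theorem lookup_isSome_iff_mem : (l.lookup a).isSome ↔ a ∈ l.map Prod.fst := by
  simp only [lookup_isSome_iff, beq_iff_eq, mem_map]
  exact exists_congr fun p => and_congr_right' eq_comm

theorem lookup_eq_none_iff_not_mem : l.lookup a = none ↔ a ∉ l.map Prod.fst := by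
  rw [← lookup_isSome_iff_mem, Option.not_isSome_iff_eq_none]

theorem mem_getD_lookup (h : a ∈ l.map Prod.fst) (d : β) : (a, (l.lookup a).getD d) ∈ l := by
  obtain ⟨b, hb⟩ := Option.isSome_iff_exists.1 (lookup_isSome_iff_mem.2 h)
  rw [hb, Option.getD_some]
  exact mem_of_lookup_eq_some hb

end List

namespace Myhill

open Function

section PartialIso

variable {α β : Type*}

structure IsPartialIso (X : Set α) (Y : Set β) (L : List (α × β)) : Prop where
  nodup_fst : (L.map Prod.fst).Nodup
  nodup_snd : (L.map Prod.snd).Nodup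
  mem_iff : ∀ p ∈ L, p.1 ∈ X ↔ p.2 ∈ Y

variable {X : Set α} {Y : Set β} {L : List (α × β)}

theorem IsPartialIso.nil : IsPartialIso X Y [] := ⟨List.nodup_nil, List.nodup_nil, by simp⟩

theorem IsPartialIso.swap (hL : IsPartialIso X Y L) : IsPartialIso Y X (L.map Prod.swap) where
  nodup_fst := by rw [List.map_map]; exact hL.nodup_snd
  nodup_snd := by rw [List.map_map]; exact hL.nodup_fst
  mem_iff p hp := by
    obtain ⟨q, hq, rfl⟩ := List.mem_map.1 hp
    exact (hL.mem_iff q hq).symm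

theorem IsPartialIso.cons (hL : IsPartialIso X Y L) {a : α} {b : β}
    (ha : a ∉ L.map Prod.fst) (hb : b ∉ L.map Prod.snd) (hab : a ∈ X ↔ b ∈ Y) :
    IsPartialIso X Y ((a, b) :: L) where
  nodup_fst := List.nodup_cons.2 ⟨ha, hL.nodup_fst⟩
  nodup_snd := List.nodup_cons.2 ⟨hb, hL.nodup_snd⟩
  mem_iff p hp := by
    rcases List.mem_cons.1 hp with rfl | hp
    exacts [hab, hL.mem_iff p hp]

theorem IsPartialIso.snd_eq (hL : IsPartialIso X Y L) {a : α} {b b' : β}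
    (h : (a, b) ∈ L) (h' : (a, b') ∈ L) : b = b' :=
  congrArg Prod.snd (List.inj_on_of_nodup_map hL.nodup_fst h h' rfl)

theorem IsPartialIso.fst_eq (hL : IsPartialIso X Y L) {a a' : α} {b : β}
    (h : (a, b) ∈ L) (h' : (a', b) ∈ L) : a = a' :=
  congrArg Prod.fst (List.inj_on_of_nodup_map hL.nodup_snd h h' rfl)

end PartialIso

section Extend

variable {α β : Type*} [DecidableEq β] {X : Set α} {Y : Set β}
  {f : α → β} {L : List (α × β)} {a : α}

def pullback (f : α → β) (L : List (α × β)) (a : α) : α :=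
  ((L.map Prod.swap).lookup (f a)).getD a

/-- `pullback f L` walks the chain `aₖ ↦ aₖ₊₁` and stays put once `f aₖ` is free, so after
`|L|` steps it has reached the end of the chain. -/
def chase (f : α → β) (L : List (α × β)) (a : α) : β :=
  f ((pullback f L)^[L.length] a)

theorem pullback_mem (h : f a ∈ L.map Prod.snd) : (pullback f L a, f a) ∈ L := by
  simpa [pullback] using List.mem_getD_lookup (l := L.map Prod.swap) (by simpa using h) a

theorem pullback_of_not_mem (h : f a ∉ L.map Prod.snd) : pullback f L a = a := by
  rw [pullback, List.lookup_eq_none_iff_not_mem.2 (by simpa using h), Option.getD_none]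

theorem pullback_mem_iff (hL : IsPartialIso X Y L) (hf : ∀ a, a ∈ X ↔ f a ∈ Y) (a : α) :
    pullback f L a ∈ X ↔ a ∈ X := by
  by_cases h : f a ∈ L.map Prod.snd
  · rw [hL.mem_iff _ (pullback_mem h), hf]
  · rw [pullback_of_not_mem h]

theorem chase_mem_iff (hL : IsPartialIso X Y L) (hf : ∀ a, a ∈ X ↔ f a ∈ Y) (a : α) :
    chase f L a ∈ Y ↔ a ∈ X := by
  rw [chase, ← hf]
  induction L.length with
  | zero => rfl
  | succ n ih => rw [iterate_succ_apply', pullback_mem_iff hL hf, ih]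

theorem chase_not_mem (hL : IsPartialIso X Y L) (hf : Injective f)
    (ha : a ∉ L.map Prod.fst) : chase f L a ∉ L.map Prod.snd := by
  classical
  let P : α → Prop := fun a => f a ∈ L.map Prod.snd
  have hmaps : ∀ a, P a → pullback f L a ∈ (L.map Prod.fst).toFinset := fun a h =>
    List.mem_toFinset.2 (List.mem_map_of_mem (f := Prod.fst) (pullback_mem h))
  have hinj : Set.InjOn (pullback f L) {a | P a} := fun a ha b hb hab =>
    hf (hL.snd_eq (pullback_mem ha) (hab ▸ pullback_mem hb))
  obtain ⟨k, hk, hkP⟩ := Function.exists_le_card_not_iterate hmaps hinj (by simpa using ha)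
  have hlen : k ≤ L.length := hk.trans ((List.toFinset_card_le _).trans (by simp))
  rw [chase, ← Nat.sub_add_cancel hlen, iterate_add_apply,
    iterate_fixed (pullback_of_not_mem hkP)]
  exact hkP

variable [DecidableEq α]

def extend (f : α → β) (L : List (α × β)) (a : α) : List (α × β) :=
  if (L.lookup a).isSome then L else (a, chase f L a) :: L

theorem IsPartialIso.extend (hL : IsPartialIso X Y L) (hf : ∀ a, a ∈ X ↔ f a ∈ Y)
    (hf_inj : Injective f) (a : α) : IsPartialIso X Y (extend f L a) := by
  unfold Myhill.extend
  split_ifs with h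
  · exact hL
  · have ha : a ∉ L.map Prod.fst := by rwa [← List.lookup_isSome_iff_mem]
    exact hL.cons ha (chase_not_mem hL hf_inj ha) (chase_mem_iff hL hf a).symm

theorem subset_extend (f : α → β) (L : List (α × β)) (a : α) : L ⊆ extend f L a := by
  unfold extend
  split_ifs
  exacts [List.Subset.refl L, List.subset_cons_self _ _]

theorem mem_map_fst_extend (f : α → β) (L : List (α × β)) (a : α) :
    a ∈ (extend f L a).map Prod.fst := by
  unfold extend
  split_ifs with h
  · exact List.lookup_isSome_iff_mem.1 h
  · exact List.mem_cons_self

def extendBack (g : β → α) (L : List (α × β)) (b : β) : List (α × β) :=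
  (extend g (L.map Prod.swap) b).map Prod.swap

theorem IsPartialIso.extendBack (hL : IsPartialIso X Y L) {g : β → α}
    (hg : ∀ b, b ∈ Y ↔ g b ∈ X) (hg_inj : Injective g) (b : β) :
    IsPartialIso X Y (extendBack g L b) :=
  (hL.swap.extend hg hg_inj b).swap

theorem subset_extendBack (g : β → α) (L : List (α × β)) (b : β) : L ⊆ extendBack g L b := by
  simpa [extendBack] using List.map_subset Prod.swap (subset_extend g (L.map Prod.swap) b)

theorem mem_map_snd_extendBack (g : β → α) (L : List (α × β)) (b : β) :
    b ∈ (extendBack g L b).map Prod.snd := by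
  simpa [extendBack] using mem_map_fst_extend g (L.map Prod.swap) b

end Extend

section Stage

variable {X Y : Set ℕ} {f g : ℕ → ℕ}

def stage (f g : ℕ → ℕ) : ℕ → List (ℕ × ℕ)
  | 0 => []
  | n + 1 => extendBack g (extend f (stage f g n) n) n

theorem isPartialIso_stage (hf : ∀ x, x ∈ X ↔ f x ∈ Y) (hg : ∀ y, y ∈ Y ↔ g y ∈ X)
    (hf_inj : Injective f) (hg_inj : Injective g) : ∀ n, IsPartialIso X Y (stage f g n)
  | 0 => .nil
  | n + 1 => ((isPartialIso_stage hf hg hf_inj hg_inj n).extend hf hf_inj n).extendBack hg hg_inj n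

theorem stage_subset_stage (f g : ℕ → ℕ) {m n : ℕ} (h : m ≤ n) : stage f g m ⊆ stage f g n := by
  induction n, h using Nat.le_induction with
  | base => exact List.Subset.refl _
  | succ n _ ih =>
    exact fun _ hp => subset_extendBack g _ n (subset_extend f _ n (ih hp))

theorem mem_map_fst_stage_succ (f g : ℕ → ℕ) (n : ℕ) : n ∈ (stage f g (n + 1)).map Prod.fst :=
  List.map_subset _ (subset_extendBack g _ n) (mem_map_fst_extend f _ n)

theorem mem_map_snd_stage_succ (f g : ℕ → ℕ) (n : ℕ) : n ∈ (stage f g (n + 1)).map Prod.snd :=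
  mem_map_snd_extendBack g _ n

def iso (f g : ℕ → ℕ) (x : ℕ) : ℕ := ((stage f g (x + 1)).lookup x).getD 0

def isoInv (f g : ℕ → ℕ) (y : ℕ) : ℕ := (((stage f g (y + 1)).map Prod.swap).lookup y).getD 0

theorem mem_stage_iso (f g : ℕ → ℕ) (x : ℕ) : (x, iso f g x) ∈ stage f g (x + 1) :=
  List.mem_getD_lookup (mem_map_fst_stage_succ f g x) 0

theorem mem_stage_isoInv (f g : ℕ → ℕ) (y : ℕ) : (isoInv f g y, y) ∈ stage f g (y + 1) := by
  simpa [isoInv] using List.mem_getD_lookup (l := (stage f g (y + 1)).map Prod.swap)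
    (by simpa using mem_map_snd_stage_succ f g y) 0

variable (hf : ∀ x, x ∈ X ↔ f x ∈ Y) (hg : ∀ y, y ∈ Y ↔ g y ∈ X)
  (hf_inj : Injective f) (hg_inj : Injective g)
include hf hg hf_inj hg_inj

theorem iso_eq_of_mem_stage {x y n : ℕ} (h : (x, y) ∈ stage f g n) : iso f g x = y := by
  have hL := isPartialIso_stage hf hg hf_inj hg_inj (max (x + 1) n)
  exact hL.snd_eq (stage_subset_stage f g (le_max_left _ _) (mem_stage_iso f g x))
    (stage_subset_stage f g (le_max_right _ _) h)

theorem isoInv_eq_of_mem_stage {x y n : ℕ} (h : (x, y) ∈ stage f g n) : isoInv f g y = x := by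
  have hL := isPartialIso_stage hf hg hf_inj hg_inj (max (y + 1) n)
  exact hL.fst_eq (stage_subset_stage f g (le_max_left _ _) (mem_stage_isoInv f g y))
    (stage_subset_stage f g (le_max_right _ _) h)

theorem mem_iff_iso_mem (x : ℕ) : x ∈ X ↔ iso f g x ∈ Y :=
  (isPartialIso_stage hf hg hf_inj hg_inj (x + 1)).mem_iff _ (mem_stage_iso f g x)

def isoEquiv : ℕ ≃ ℕ where
  toFun := iso f g
  invFun := isoInv f g
  left_inv x := isoInv_eq_of_mem_stage hf hg hf_inj hg_inj (mem_stage_iso f g x)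
  right_inv y := iso_eq_of_mem_stage hf hg hf_inj hg_inj (mem_stage_isoInv f g y)

end Stage

section Computability

variable {α β : Type*} [Primcodable α] [Primcodable β] [DecidableEq β] {f : α → β}

theorem computable_pullback (hf : Computable f) : Computable₂ (pullback f) :=
  Computable.option_getD
    (Primrec.list_lookup.to_comp.comp (hf.comp Computable.snd)
      (Primrec.list_map_swap.to_comp.comp Computable.fst))
    Computable.snd

theorem computable_chase (hf : Computable f) : Computable₂ (chase f) :=
  hf.comp <| Computable.nat_iterate (Computable.list_length.comp Computable.fst) Computable.snd
    ((computable_pullback hf).comp (Computable.fst.comp Computable.fst) Computable.snd)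

variable [DecidableEq α]

theorem computable_extend (hf : Computable f) : Computable₂ (extend f) :=
  (Computable.cond (Primrec.option_isSome.to_comp.comp
      (Primrec.list_lookup.to_comp.comp Computable.snd Computable.fst))
    Computable.fst
    (Primrec.list_cons.to_comp.comp (Computable.pair Computable.snd (computable_chase hf))
      Computable.fst)).of_eq
    fun p => by simp [Myhill.extend, Bool.cond_eq_ite]

theorem computable_extendBack {g : β → α} (hg : Computable g) : Computable₂ (extendBack g) :=
  Primrec.list_map_swap.to_comp.comp
    ((computable_extend hg).comp (Primrec.list_map_swap.to_comp.comp Computable.fst)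
      Computable.snd)

theorem computable_stage {f g : ℕ → ℕ} (hf : Computable f) (hg : Computable g) :
    Computable (stage f g) :=
  (Computable.nat_rec Computable.id (Computable.const [])
    ((computable_extendBack hg).comp ((computable_extend hf).comp
      (Computable.snd.comp Computable.snd) (Computable.fst.comp Computable.snd))
      (Computable.fst.comp Computable.snd)).to₂).of_eq
    fun n => by induction n <;> simp_all [Myhill.stage]

theorem computable_iso {f g : ℕ → ℕ} (hf : Computable f) (hg : Computable g) :
    Computable (iso f g) :=
  Computable.option_getD (Primrec.list_lookup.to_comp.comp Computable.id
    ((computable_stage hf hg).comp Computable.succ)) (Computable.const 0)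

theorem computable_isoInv {f g : ℕ → ℕ} (hf : Computable f) (hg : Computable g) :
    Computable (isoInv f g) :=
  Computable.option_getD (Primrec.list_lookup.to_comp.comp Computable.id
    (Primrec.list_map_swap.to_comp.comp ((computable_stage hf hg).comp Computable.succ)))
    (Computable.const 0)

end Computability

end Myhill

theorem OneOneEq.exists_computable_equiv {X Y : Set ℕ} (h : OneOneEq X Y) :
    ∃ e : ℕ ≃ ℕ, Computable e ∧ Computable e.symm ∧ ∀ x, x ∈ X ↔ e x ∈ Y := by
  obtain ⟨⟨f, hf, hf_inj, hf_red⟩, ⟨g, hg, hg_inj, hg_red⟩⟩ := h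
  exact ⟨Myhill.isoEquiv hf_red hg_red hf_inj hg_inj, Myhill.computable_iso hf hg,
    Myhill.computable_isoInv hf hg, Myhill.mem_iff_iso_mem hf_red hg_red hf_inj hg_inj⟩

theorem stmt18 (A B : Set ℕ) (h : OneOneEq A B) :
    ∃ h' g : ℕ → ℕ, Computable h' ∧ Computable g ∧
      Function.LeftInverse g h' ∧ Function.RightInverse g h' ∧
      h' '' B = A ∧ h' '' Bᶜ = Aᶜ := by
  obtain ⟨e, he, he_symm, he_mem⟩ := OneOneEq.exists_computable_equiv h.symm
  have himage : e '' B = A := by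
    ext y
    rw [e.image_eq_preimage_symm, Set.mem_preimage, he_mem, e.apply_symm_apply]
  refine ⟨e, e.symm, he, he_symm, e.left_inv, e.right_inv, himage, ?_⟩
  rw [Set.image_compl_eq e.bijective, himage]
end
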